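/- Let Φ_τ, Ψ_τ be positive operators on a finite-dimensional Hilbert space H = g⊗h with Tr_h Φ_τ = Tr_h Ψ_τ = 𝟙_g. Then for every density operator ρ on g, the pointwise squared Hellinger distance inf { (1/2)Tr[(Γ−Υ)†(Γ−Υ)(ρ⊗𝟙_h)] : Γ†Γ = Φ_τ, Υ†Υ = Ψ_τ } equals 1 − Tr[( Φ_τ^{1/2}(ρ⊗𝟙)Ψ_τ(ρ⊗𝟙)Φ_τ^{1/2} )^{1/2}]. -/

import Mathlib

/-!
Expanding the square and using Tr[Φ(ρ⊗𝟙)] = Tr[Ψ(ρ⊗𝟙)] = 1, the objective becomes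
1 − Re Tr[Γ†Υ(ρ⊗𝟙)]. By polar decomposition every Γ with Γ†Γ = Φ is U Φ^{1/2} with
U unitary, and likewise Υ = V Ψ^{1/2}, so Re Tr[Γ†Υ(ρ⊗𝟙)] = Re Tr[U†V M] with
M = Ψ^{1/2}(ρ⊗𝟙)Φ^{1/2}.
The supremum of Re Tr[W M] over unitaries W is the trace norm Tr |M|, attained at the adjoint of
the polar factor of M, and M†M = Φ^{1/2}(ρ⊗𝟙)Ψ(ρ⊗𝟙)Φ^{1/2}.
-/

open Matrix
open scoped ComplexOrder Classical

noncomputable def msqrt {ι : Type*} [Fintype ι] [DecidableEq ι]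
    (A : Matrix ι ι ℂ) : Matrix ι ι ℂ :=
  if h : A.PosSemidef then
    h.1.eigenvectorUnitary.1 * diagonal ((↑) ∘ (√·) ∘ h.1.eigenvalues) *
      (star h.1.eigenvectorUnitary : Matrix ι ι ℂ) else 0

noncomputable def traceNorm {ι : Type*} [Fintype ι] [DecidableEq ι]
    (A : Matrix ι ι ℂ) : ℝ :=
  ((msqrt (Aᴴ * A)).trace).re

noncomputable def uFid {ι : Type*} [Fintype ι] [DecidableEq ι]
    (ρ σ : Matrix ι ι ℂ) : ℝ :=
  ((msqrt (msqrt ρ * σ * msqrt ρ)).trace).re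

def IsDensity {ι : Type*} [Fintype ι] (ρ : Matrix ι ι ℂ) : Prop :=
  ρ.PosSemidef ∧ ρ.trace = 1
open Kronecker

/-- Partial trace over the second tensor factor. -/
noncomputable def ptraceRight {m n : ℕ} (M : Matrix (Fin m × Fin n) (Fin m × Fin n) ℂ) :
    Matrix (Fin m) (Fin m) ℂ :=
  fun i j => ∑ k : Fin n, M (i, k) (j, k)

section

variable {ι : Type*} [Fintype ι]

lemma inner_toLp_transpose (C : Matrix ι ι ℂ) (i j : ι) :
    inner ℂ (WithLp.toLp 2 (Cᵀ i)) (WithLp.toLp 2 (Cᵀ j)) = (Cᴴ * C) i j := by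
  simp [EuclideanSpace.inner_toLp_toLp, dotProduct, mul_apply, mul_comm]

variable [DecidableEq ι]

lemma msqrt_of_posSemidef {A : Matrix ι ι ℂ} (hA : A.PosSemidef) : msqrt A =
    Unitary.conjStarAlgAut ℂ _ hA.1.eigenvectorUnitary
      (diagonal ((↑) ∘ (√·) ∘ hA.1.eigenvalues)) :=
  dif_pos hA

lemma posSemidef_msqrt {A : Matrix ι ι ℂ} (hA : A.PosSemidef) : (msqrt A).PosSemidef := by
  rw [msqrt_of_posSemidef hA, Unitary.conjStarAlgAut_apply]
  exact (posSemidef_diagonal_iff.2 fun i => by simp [Real.sqrt_nonneg]).mul_mul_conjTranspose_same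
    _

lemma conjTranspose_msqrt {A : Matrix ι ι ℂ} (hA : A.PosSemidef) : (msqrt A)ᴴ = msqrt A :=
  (posSemidef_msqrt hA).1

lemma msqrt_mul_msqrt {A : Matrix ι ι ℂ} (hA : A.PosSemidef) : msqrt A * msqrt A = A := by
  conv_rhs => rw [hA.1.spectral_theorem]
  rw [msqrt_of_posSemidef hA, ← map_mul, diagonal_mul_diagonal]
  congr 2; funext i
  simp [← Complex.ofReal_mul, Real.mul_self_sqrt (hA.eigenvalues_nonneg i)]

lemma re_trace_unitary_mul_le_re_trace {W S : Matrix ι ι ℂ} (hW : W ∈ unitaryGroup ι ℂ)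
    (hS : S.PosSemidef) :
    (W * S).trace.re ≤ S.trace.re := by
  -- In an eigenbasis of `S` the trace is `∑ (V†WV)ᵢᵢ λᵢ`, and unitary entries have modulus ≤ 1.
  set V : Matrix ι ι ℂ := ↑hS.1.eigenvectorUnitary
  set d := hS.1.eigenvalues
  have hV : V ∈ unitaryGroup ι ℂ := hS.1.eigenvectorUnitary.2
  have hWV : star V * W * V ∈ unitaryGroup ι ℂ :=
    mul_mem (mul_mem (Unitary.star_mem hV) hW) hV
  have hSV : S = V * diagonal ((↑) ∘ d) * star V := hS.1.spectral_theorem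
  have htr : (W * S).trace = ∑ i, (star V * W * V) i i * d i := by
    rw [hSV, ← mul_assoc, trace_mul_cycle, ← mul_assoc]
    simp [trace, mul_diagonal]
  rw [htr, hS.1.trace_eq_sum_eigenvalues, Complex.re_sum, Complex.re_sum]
  refine Finset.sum_le_sum fun i _ => ?_
  rw [Complex.re_mul_ofReal]
  change _ ≤ d i
  exact mul_le_of_le_one_left (hS.eigenvalues_nonneg i)
    ((Complex.re_le_norm _).trans (entry_norm_bound_of_unitary hWV i i))

lemma exists_unitary_eq_mul_diagonal_sqrt {C : Matrix ι ι ℂ} {d : ι → ℝ} (hd : ∀ i, 0 ≤ d i)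
    (hC : Cᴴ * C = diagonal ((↑) ∘ d)) :
    ∃ W ∈ unitaryGroup ι ℂ, C = W * diagonal ((↑) ∘ (√·) ∘ d) := by
  have hsqrt : ∀ i, d i ≠ 0 → (√(d i) : ℂ) ≠ 0 := fun i hi => by
    exact_mod_cast (Real.sqrt_pos.2 ((hd i).lt_of_ne' hi)).ne'
  -- The nonzero columns, normalised, are orthonormal; `W` completes them to an orthonormal basis.
  set v : ι → EuclideanSpace ℂ ι := fun i => ((√(d i))⁻¹ : ℂ) • WithLp.toLp 2 (Cᵀ i)
  have hv : Orthonormal ℂ ({i | d i ≠ 0}.domRestrict v) := by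
    rw [orthonormal_iff_ite]
    rintro ⟨i, hi⟩ ⟨j, hj⟩
    simp only [Set.domRestrict_apply, v, inner_smul_left, inner_smul_right, inner_toLp_transpose,
      hC, Subtype.mk.injEq]
    by_cases hij : i = j
    · subst hij
      have := hsqrt i hi
      have hsq : (√(d i) : ℂ) ^ 2 = d i := by exact_mod_cast Real.sq_sqrt (hd i)
      simp only [diagonal_apply_eq, Function.comp_apply, map_inv₀, Complex.conj_ofReal, if_true]
      rw [← hsq]
      field_simp
    · simp [hij]
  obtain ⟨b, hb⟩ := hv.exists_orthonormalBasis_extension_of_card_eq (by simp)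
  refine ⟨(EuclideanSpace.basisFun ι ℂ).toBasis.toMatrix b.toBasis,
    (EuclideanSpace.basisFun ι ℂ).toMatrix_orthonormalBasis_mem_unitary b, ?_⟩
  ext k i
  rw [mul_diagonal]
  change C k i = b i k * √(d i)
  by_cases hi : d i = 0
  · have : Cᵀ i = 0 := dotProduct_star_self_eq_zero.1 <| by
      rw [← dotProduct_comm, ← EuclideanSpace.inner_toLp_toLp, inner_toLp_transpose, hC]
      simp [hi]
    simpa [hi] using congrFun this k
  · rw [hb i hi]
    have := hsqrt i hi
    simp [v]
    field_simp

lemma exists_unitary_eq_mul_msqrt (A : Matrix ι ι ℂ) :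
    ∃ U ∈ unitaryGroup ι ℂ, A = U * msqrt (Aᴴ * A) := by
  have hP := posSemidef_conjTranspose_mul_self A
  set V : Matrix ι ι ℂ := ↑hP.1.eigenvectorUnitary
  have hV : V ∈ unitaryGroup ι ℂ := hP.1.eigenvectorUnitary.2
  have hAV : (A * V)ᴴ * (A * V) = diagonal ((↑) ∘ hP.1.eigenvalues) := by
    refine Eq.trans ?_ hP.1.conjStarAlgAut_star_eigenvectorUnitary
    simp [V, conjTranspose_mul, star_eq_conjTranspose, mul_assoc]
  obtain ⟨W, hW, hAVW⟩ := exists_unitary_eq_mul_diagonal_sqrt hP.eigenvalues_nonneg hAV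
  refine ⟨W * star V, mul_mem hW (Unitary.star_mem hV), ?_⟩
  rw [msqrt_of_posSemidef hP, Unitary.conjStarAlgAut_apply]
  calc A = A * V * star V := by rw [mul_assoc, Unitary.mul_star_self_of_mem hV, mul_one]
    _ = W * star V * (V * diagonal ((↑) ∘ (√·) ∘ hP.1.eigenvalues) * star V) := by
      rw [hAVW]
      simp only [mul_assoc]
      rw [← mul_assoc (star V) V, Unitary.star_mul_self_of_mem hV, one_mul]

lemma re_trace_unitary_mul_le_traceNorm {W : Matrix ι ι ℂ} (hW : W ∈ unitaryGroup ι ℂ)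
    (M : Matrix ι ι ℂ) : (W * M).trace.re ≤ traceNorm M := by
  obtain ⟨U, hU, hM⟩ := exists_unitary_eq_mul_msqrt M
  calc (W * M).trace.re = (W * U * msqrt (Mᴴ * M)).trace.re := by rw [mul_assoc, ← hM]
    _ ≤ traceNorm M := re_trace_unitary_mul_le_re_trace (mul_mem hW hU)
      (posSemidef_msqrt (posSemidef_conjTranspose_mul_self M))

lemma exists_unitary_re_trace_mul_eq_traceNorm (M : Matrix ι ι ℂ) :
    ∃ W ∈ unitaryGroup ι ℂ, (W * M).trace.re = traceNorm M := by
  obtain ⟨U, hU, hM⟩ := exists_unitary_eq_mul_msqrt M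
  refine ⟨star U, Unitary.star_mem hU, ?_⟩
  conv_lhs => rw [hM, ← mul_assoc, Unitary.star_mul_self_of_mem hU, one_mul]
  rfl

lemma conjTranspose_mul_self_unitary_mul_msqrt {U A : Matrix ι ι ℂ} (hU : U ∈ unitaryGroup ι ℂ)
    (hA : A.PosSemidef) : (U * msqrt A)ᴴ * (U * msqrt A) = A := by
  rw [conjTranspose_mul, conjTranspose_msqrt hA, ← star_eq_conjTranspose, mul_assoc,
    ← mul_assoc (star U), Unitary.star_mul_self_of_mem hU, one_mul, msqrt_mul_msqrt hA]

lemma half_re_trace_conjTranspose_sub_mul_eq {Γ Υ X : Matrix ι ι ℂ} (hX : Xᴴ = X)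
    (hΓ : (Γᴴ * Γ * X).trace.re = 1) (hΥ : (Υᴴ * Υ * X).trace.re = 1) :
    1 / 2 * ((Γ - Υ)ᴴ * (Γ - Υ) * X).trace.re = 1 - (Γᴴ * Υ * X).trace.re := by
  have hswap : (Υᴴ * Γ * X).trace.re = (Γᴴ * Υ * X).trace.re := by
    rw [trace_mul_comm, ← Complex.conj_re, ← Complex.star_def, ← trace_conjTranspose]
    simp [conjTranspose_mul, hX, mul_assoc]
  have hexp : (Γ - Υ)ᴴ * (Γ - Υ) * X =
      Γᴴ * Γ * X - Γᴴ * Υ * X - Υᴴ * Γ * X + Υᴴ * Υ * X := by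
    rw [conjTranspose_sub]; noncomm_ring
  rw [hexp, trace_add, trace_sub, trace_sub]
  simp only [Complex.add_re, Complex.sub_re, hΓ, hΥ, hswap]
  ring

lemma trace_conjTranspose_mul_msqrt_mul_eq {U V Φ Ψ X : Matrix ι ι ℂ} (hΦ : Φ.PosSemidef) :
    ((U * msqrt Φ)ᴴ * (V * msqrt Ψ) * X).trace =
      (star U * V * (msqrt Ψ * X * msqrt Φ)).trace := by
  rw [conjTranspose_mul, conjTranspose_msqrt hΦ, ← star_eq_conjTranspose]
  simp only [mul_assoc]
  rw [trace_mul_comm]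
  simp only [mul_assoc]

theorem sInf_half_re_trace_eq_one_sub_traceNorm {Φ Ψ X : Matrix ι ι ℂ} (hΦ : Φ.PosSemidef)
    (hΨ : Ψ.PosSemidef) (hX : Xᴴ = X) (hΦX : (Φ * X).trace.re = 1)
    (hΨX : (Ψ * X).trace.re = 1) :
    sInf {t : ℝ | ∃ Γ Υ : Matrix ι ι ℂ, Γᴴ * Γ = Φ ∧ Υᴴ * Υ = Ψ ∧
        t = 1 / 2 * ((Γ - Υ)ᴴ * (Γ - Υ) * X).trace.re} =
      1 - traceNorm (msqrt Ψ * X * msqrt Φ) := by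
  refine IsLeast.csInf_eq ⟨?_, ?_⟩
  · obtain ⟨W, hW, hWM⟩ := exists_unitary_re_trace_mul_eq_traceNorm (msqrt Ψ * X * msqrt Φ)
    have hΓ := conjTranspose_mul_self_unitary_mul_msqrt (one_mem _) hΦ
    have hΥ := conjTranspose_mul_self_unitary_mul_msqrt hW hΨ
    refine ⟨_, _, hΓ, hΥ, ?_⟩
    rw [half_re_trace_conjTranspose_sub_mul_eq hX (by rwa [hΓ]) (by rwa [hΥ]),
      trace_conjTranspose_mul_msqrt_mul_eq hΦ, star_one, one_mul, hWM]
  · rintro t ⟨Γ, Υ, hΓ, hΥ, rfl⟩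
    obtain ⟨U, hU, hΓU⟩ := exists_unitary_eq_mul_msqrt Γ
    obtain ⟨V, hV, hΥV⟩ := exists_unitary_eq_mul_msqrt Υ
    rw [half_re_trace_conjTranspose_sub_mul_eq hX (by rwa [hΓ]) (by rwa [hΥ]), hΓU, hΥV, hΓ,
      hΥ, trace_conjTranspose_mul_msqrt_mul_eq hΦ]
    linarith [re_trace_unitary_mul_le_traceNorm (mul_mem (Unitary.star_mem hU) hV)
      (msqrt Ψ * X * msqrt Φ)]

lemma traceNorm_msqrt_mul_mul_msqrt {Φ Ψ X : Matrix ι ι ℂ} (hΦ : Φ.PosSemidef)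
    (hΨ : Ψ.PosSemidef) (hX : Xᴴ = X) :
    traceNorm (msqrt Ψ * X * msqrt Φ) = (msqrt (msqrt Φ * X * Ψ * X * msqrt Φ)).trace.re := by
  rw [traceNorm, conjTranspose_mul, conjTranspose_mul, conjTranspose_msqrt hΦ,
    conjTranspose_msqrt hΨ, hX]
  simp only [mul_assoc]
  rw [← mul_assoc (msqrt Ψ) (msqrt Ψ), msqrt_mul_msqrt hΨ]

end

lemma trace_mul_kronecker_one {m n : ℕ} (A : Matrix (Fin m × Fin n) (Fin m × Fin n) ℂ)
    (ρ : Matrix (Fin m) (Fin m) ℂ) :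
    (A * (ρ ⊗ₖ (1 : Matrix (Fin n) (Fin n) ℂ))).trace = (ptraceRight A * ρ).trace := by
  simp only [trace, diag, mul_apply, ptraceRight, kroneckerMap_apply, one_apply,
    Fintype.sum_prod_type, mul_ite, mul_one, mul_zero, Finset.sum_ite_eq', Finset.mem_univ,
    if_true, Finset.sum_mul]
  exact Finset.sum_congr rfl fun i _ => Finset.sum_comm

/-- Pointwise squared Hellinger distance between channels with operational
densities `Φτ, Ψτ`: for each density `ρ`,
`inf {(1/2)Tr[(Γ−Υ)†(Γ−Υ)(ρ⊗𝟙)] : Γ†Γ = Φτ, Υ†Υ = Ψτ}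
  = 1 − Tr[(Φτ^{1/2}(ρ⊗𝟙)Ψτ(ρ⊗𝟙)Φτ^{1/2})^{1/2}]`. -/
theorem stmt12 {m n : ℕ} (Φτ Ψτ : Matrix (Fin m × Fin n) (Fin m × Fin n) ℂ)
    (hΦ : Φτ.PosSemidef) (hΨ : Ψτ.PosSemidef)
    (hΦ1 : ptraceRight Φτ = 1) (hΨ1 : ptraceRight Ψτ = 1)
    (ρ : Matrix (Fin m) (Fin m) ℂ) (hρ : IsDensity ρ) :
    sInf {t : ℝ | ∃ Γ Υ : Matrix (Fin m × Fin n) (Fin m × Fin n) ℂ,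
        Γᴴ * Γ = Φτ ∧ Υᴴ * Υ = Ψτ ∧
        t = (1 / 2) * ((((Γ - Υ)ᴴ * (Γ - Υ) *
          (ρ ⊗ₖ (1 : Matrix (Fin n) (Fin n) ℂ))).trace).re)} =
      1 - ((msqrt (msqrt Φτ * (ρ ⊗ₖ (1 : Matrix (Fin n) (Fin n) ℂ)) * Ψτ *
        (ρ ⊗ₖ (1 : Matrix (Fin n) (Fin n) ℂ)) * msqrt Φτ)).trace).re := by
  obtain ⟨hρpos, hρtr⟩ := hρ
  have hX : (ρ ⊗ₖ (1 : Matrix (Fin n) (Fin n) ℂ))ᴴ = ρ ⊗ₖ 1 := by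
    rw [conjTranspose_kronecker, hρpos.1, conjTranspose_one]
  have hΦX : (Φτ * (ρ ⊗ₖ (1 : Matrix (Fin n) (Fin n) ℂ))).trace.re = 1 := by
    rw [trace_mul_kronecker_one, hΦ1, one_mul, hρtr, Complex.one_re]
  have hΨX : (Ψτ * (ρ ⊗ₖ (1 : Matrix (Fin n) (Fin n) ℂ))).trace.re = 1 := by
    rw [trace_mul_kronecker_one, hΨ1, one_mul, hρtr, Complex.one_re]
  rw [sInf_half_re_trace_eq_one_sub_traceNorm hΦ hΨ hX hΦX hΨX,
    traceNorm_msqrt_mul_mul_msqrt hΦ hΨ hX]
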